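/- arXiv:math/0604180 — 4 statements merged into one kernel-verified Lean document; each statement's English description precedes it below -/
import Mathlib

section
/- Let T be a monad on a category C. For a natural transformation a : 1_C → T, define L_a, R_a : T → T by (L_a)_X = μ_X ∘ a_{T(X)} and (R_a)_X = μ_X ∘ T(a_X). Then the following are equivalent: (i) L_a = R_a; (ii) for every T-module (M,r), the morphism r ∘ a_M : M → M is T-linear; (iii) there exists a (necessarily unique) natural transformation ã : 1_{T\text{-}C} → 1_{T\text{-}C} of the identity functor of the Eilenberg–Moore category with U_T(ã)_{(M,r)} = r ∘ a_M. -/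
/-!
The morphism `r ∘ a_M` always commutes with `T`-linear maps, by naturality of `a`, so it is the
component of an endomorphism of the identity of the Eilenberg–Moore category exactly when it is
itself `T`-linear. Centrality gives linearity through the associativity law of `r`. Conversely,
linearity on the free module `(T X, μ_X)`, precomposed with `T(η_X)`, is the equation
`L_a = R_a` at `X`, since `μ_X ∘ a_{T X} ∘ η_X = a_X`.
-/

open CategoryTheory

namespace CategoryTheory.Monad

variable {C : Type*} [Category C] {T : Monad C} (a : 𝟭 C ⟶ T.toFunctor)

lemma Algebra.Hom.comp_app_comp_a {M N : T.Algebra} (f : M ⟶ N) :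
    f.f ≫ a.app N.A ≫ N.a = (a.app M.A ≫ M.a) ≫ f.f := by
  rw [Category.assoc, ← f.h]
  exact a.naturality_assoc f.f N.a

lemma a_comp_app_comp_a_of_central
    (hc : ∀ X : C, a.app (T.obj X) ≫ T.μ.app X = T.map (a.app X) ≫ T.μ.app X)
    (M : T.Algebra) : M.a ≫ a.app M.A ≫ M.a = T.map (a.app M.A ≫ M.a) ≫ M.a := by
  calc M.a ≫ a.app M.A ≫ M.a
      = a.app (T.obj M.A) ≫ T.map M.a ≫ M.a := a.naturality_assoc M.a M.a
    _ = (a.app (T.obj M.A) ≫ T.μ.app M.A) ≫ M.a := by rw [Category.assoc, M.assoc]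
    _ = T.map (a.app M.A) ≫ T.map M.a ≫ M.a := by rw [hc, Category.assoc, ← M.assoc]
    _ = T.map (a.app M.A ≫ M.a) ≫ M.a := by rw [Functor.map_comp_assoc]

lemma η_app_comp_app_comp_μ_app (X : C) :
    T.η.app X ≫ a.app (T.obj X) ≫ T.μ.app X = a.app X := by
  calc T.η.app X ≫ a.app (T.obj X) ≫ T.μ.app X
      = a.app X ≫ T.map (T.η.app X) ≫ T.μ.app X := a.naturality_assoc (T.η.app X) _
    _ = a.app X := by rw [T.right_unit]; exact Category.comp_id _

lemma central_of_free_linear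
    (h : ∀ X : C, T.μ.app X ≫ a.app (T.obj X) ≫ T.μ.app X =
      T.map (a.app (T.obj X) ≫ T.μ.app X) ≫ T.μ.app X)
    (X : C) : a.app (T.obj X) ≫ T.μ.app X = T.map (a.app X) ≫ T.μ.app X := by
  calc a.app (T.obj X) ≫ T.μ.app X
      = T.map (T.η.app X) ≫ T.μ.app X ≫ a.app (T.obj X) ≫ T.μ.app X :=
        (T.right_unit_assoc _ _).symm
    _ = T.map (T.η.app X ≫ a.app (T.obj X) ≫ T.μ.app X) ≫ T.μ.app X := by
        rw [h]; simp only [Functor.map_comp, Category.assoc]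
    _ = T.map (a.app X) ≫ T.μ.app X := by rw [η_app_comp_app_comp_μ_app]

def centralEndo
    (hc : ∀ X : C, a.app (T.obj X) ≫ T.μ.app X = T.map (a.app X) ≫ T.μ.app X) :
    𝟭 T.Algebra ⟶ 𝟭 T.Algebra where
  app M := ⟨a.app M.A ≫ M.a, (a_comp_app_comp_a_of_central a hc M).symm⟩
  naturality _ _ f := Algebra.Hom.ext (Algebra.Hom.comp_app_comp_a a f)

end CategoryTheory.Monad

open CategoryTheory.Monad in
/-- For a monad `T` on `C` and `a : 𝟭 C ⟶ T`, the following are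
equivalent: (i) `L_a = R_a` (i.e. `a` is a central element of `T`), where
`(L_a)_X = μ_X ∘ a_{T X}` and `(R_a)_X = μ_X ∘ T(a_X)`;
(ii) for every `T`-module `(M,r)`, the morphism `r ∘ a_M : M ⟶ M` is `T`-linear;
(iii) there is a (necessarily unique) natural transformation `atil` of the identity
functor of the Eilenberg–Moore category with `U_T(atil)_{(M,r)} = r ∘ a_M`. -/
theorem stmt1 {C : Type*} [Category C] (T : Monad C) (a : 𝟭 C ⟶ T.toFunctor) :
    ((∀ X : C, a.app (T.obj X) ≫ T.μ.app X = T.map (a.app X) ≫ T.μ.app X) ↔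
      (∀ M : T.Algebra,
        M.a ≫ (a.app M.A ≫ M.a) = T.map (a.app M.A ≫ M.a) ≫ M.a)) ∧
    ((∀ X : C, a.app (T.obj X) ≫ T.μ.app X = T.map (a.app X) ≫ T.μ.app X) ↔
      (∃! atil : 𝟭 T.Algebra ⟶ 𝟭 T.Algebra,
        ∀ M : T.Algebra, (atil.app M).f = a.app M.A ≫ M.a)) := by
  have central_iff_linear := Iff.intro (a_comp_app_comp_a_of_central a) fun h =>
    central_of_free_linear a fun X => h (T.free.obj X)
  refine ⟨central_iff_linear, central_iff_linear.trans ⟨fun h => ?_, ?_⟩⟩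
  · refine ⟨centralEndo a (central_iff_linear.mpr h), fun _ => rfl, fun b hb => ?_⟩
    ext M : 2
    exact Algebra.Hom.ext (hb M)
  · rintro ⟨atil, hatil, -⟩ M
    simpa only [Functor.id_obj, hatil M] using (atil.app M).h.symm
end

section
/- Let T be a bimonad on a monoidal category C which admits a left antipode s^l. Then s^l is compatible with the monad structure: s^l_X ∘ μ_{ˡT(X)} = s^l_X ∘ T(s^l_{T(X)}) ∘ T²(ˡμ_X) and s^l_X ∘ η_{ˡT(X)} = ˡη_X for all objects X, where ˡf denotes the left dual (transpose) of a morphism f. -/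
/-!
Put `a_X = s_{T X} ∘ T(ˡμ_X) : T(ˡT X) ⟶ ˡT X`. Naturality of `s` and the unit law of `T` give
`s_X = ˡη_X ∘ a_X`, so both identities follow once `a_X` is a `T`-algebra structure on `ˡT X`.
The antipode axioms say that `a_X`, together with `μ_X` acting on `T X`, is compatible with the
evaluation and with the coevaluation of the duality between `T X` and `ˡT X`. For an oplax
monoidal endofunctor `S` and an `S`-action on `M`, an `S`-action on the dual that is compatible
with evaluation equals one that is compatible with coevaluation, just as a left inverse equals a
right inverse. Since `μ` and `η` are comonoidal, `a_X ∘ μ` and `a_X ∘ T(a_X)` are such a pair for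
`S = T²` (with `μ_X ∘ T(μ_X)` acting on `T X`), and `id` and `a_X ∘ η` are such a pair for `S = 𝟭`.
-/

open CategoryTheory MonoidalCategory

namespace HopfMonadPaper

variable {C : Type*} [Category C] [MonoidalCategory C]

/-- A comonoidal (oplax monoidal) structure on an endofunctor `T`,
with coproduct `δ X Y : T(X ⊗ Y) ⟶ T(X) ⊗ T(Y)` and counit `ε : T(𝟙) ⟶ 𝟙`. -/
structure Comonoidal (T : C ⥤ C) where
  δ : ∀ X Y : C, T.obj (X ⊗ Y) ⟶ T.obj X ⊗ T.obj Y
  ε : T.obj (𝟙_ C) ⟶ 𝟙_ C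
  δ_natural : ∀ {X X' Y Y' : C} (f : X ⟶ X') (g : Y ⟶ Y'),
    T.map (f ⊗ₘ g) ≫ δ X' Y' = δ X Y ≫ (T.map f ⊗ₘ T.map g)
  coassoc : ∀ X Y Z : C,
    δ (X ⊗ Y) Z ≫ (δ X Y ⊗ₘ 𝟙 (T.obj Z)) ≫ (α_ (T.obj X) (T.obj Y) (T.obj Z)).hom
      = T.map (α_ X Y Z).hom ≫ δ X (Y ⊗ Z) ≫ (𝟙 (T.obj X) ⊗ₘ δ Y Z)
  counit_left : ∀ X : C,
    δ (𝟙_ C) X ≫ (ε ⊗ₘ 𝟙 (T.obj X)) ≫ (λ_ (T.obj X)).hom = T.map (λ_ X).hom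
  counit_right : ∀ X : C,
    δ X (𝟙_ C) ≫ (𝟙 (T.obj X) ⊗ₘ ε) ≫ (ρ_ (T.obj X)).hom = T.map (ρ_ X).hom

/-- The bimonad axioms: the product and unit of the monad are comonoidal. -/
structure IsBimonad (T : Monad C) (Q : Comonoidal T.toFunctor) : Prop where
  mu_δ : ∀ X Y : C, T.μ.app (X ⊗ Y) ≫ Q.δ X Y
    = T.map (Q.δ X Y) ≫ Q.δ (T.obj X) (T.obj Y) ≫ (T.μ.app X ⊗ₘ T.μ.app Y)
  mu_ε : T.μ.app (𝟙_ C) ≫ Q.ε = T.map Q.ε ≫ Q.ε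
  eta_δ : ∀ X Y : C, T.η.app (X ⊗ Y) ≫ Q.δ X Y = T.η.app X ⊗ₘ T.η.app Y
  eta_ε : T.η.app (𝟙_ C) ≫ Q.ε = 𝟙 (𝟙_ C)

/-- A choice of left duals: `d X = ˡX` with evaluation `ev X : ˡX ⊗ₘ X ⟶ 𝟙`
and coevaluation `coev X : 𝟙 ⟶ X ⊗ₘ ˡX`, satisfying the triangle identities. -/
structure LeftDualData (C : Type*) [Category C] [MonoidalCategory C] where
  d : C → C
  ev : ∀ X : C, d X ⊗ X ⟶ 𝟙_ C
  coev : ∀ X : C, 𝟙_ C ⟶ X ⊗ d X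
  tri1 : ∀ X : C, (ρ_ (d X)).inv ≫ (𝟙 (d X) ⊗ₘ coev X) ≫ (α_ (d X) X (d X)).inv
    ≫ (ev X ⊗ₘ 𝟙 (d X)) ≫ (λ_ (d X)).hom = 𝟙 (d X)
  tri2 : ∀ X : C, (λ_ X).inv ≫ (coev X ⊗ₘ 𝟙 X) ≫ (α_ X (d X) X).hom
    ≫ (𝟙 X ⊗ₘ ev X) ≫ (ρ_ X).hom = 𝟙 X

/-- Left transpose (left dual) of a morphism. -/
def LeftDualData.tr (L : LeftDualData C) {X Y : C} (f : X ⟶ Y) : L.d Y ⟶ L.d X :=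
  (ρ_ (L.d Y)).inv ≫ (𝟙 (L.d Y) ⊗ₘ L.coev X) ≫ (𝟙 (L.d Y) ⊗ₘ (f ⊗ₘ 𝟙 (L.d X)))
    ≫ (α_ (L.d Y) Y (L.d X)).inv ≫ (L.ev Y ⊗ₘ 𝟙 (L.d X)) ≫ (λ_ (L.d X)).hom

/-- A choice of right duals: `d X = ʳX` with evaluation `ev X : X ⊗ₘ ʳX ⟶ 𝟙`
and coevaluation `coev X : 𝟙 ⟶ ʳX ⊗ₘ X`, satisfying the triangle identities. -/
structure RightDualData (C : Type*) [Category C] [MonoidalCategory C] where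
  d : C → C
  ev : ∀ X : C, X ⊗ d X ⟶ 𝟙_ C
  coev : ∀ X : C, 𝟙_ C ⟶ d X ⊗ X
  tri1 : ∀ X : C, (ρ_ X).inv ≫ (𝟙 X ⊗ₘ coev X) ≫ (α_ X (d X) X).inv
    ≫ (ev X ⊗ₘ 𝟙 X) ≫ (λ_ X).hom = 𝟙 X
  tri2 : ∀ X : C, (λ_ (d X)).inv ≫ (coev X ⊗ₘ 𝟙 (d X)) ≫ (α_ (d X) X (d X)).hom
    ≫ (𝟙 (d X) ⊗ₘ ev X) ≫ (ρ_ (d X)).hom = 𝟙 (d X)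

/-- Right transpose (right dual) of a morphism. -/
def RightDualData.tr (R : RightDualData C) {X Y : C} (f : X ⟶ Y) : R.d Y ⟶ R.d X :=
  (λ_ (R.d Y)).inv ≫ (R.coev X ⊗ₘ 𝟙 (R.d Y)) ≫ (α_ (R.d X) X (R.d Y)).hom
    ≫ (𝟙 (R.d X) ⊗ₘ (f ⊗ₘ 𝟙 (R.d Y))) ≫ (𝟙 (R.d X) ⊗ₘ R.ev Y) ≫ (ρ_ (R.d X)).hom

/-- The axioms for a left antipode `s X : T(ˡT(X)) ⟶ ˡX` of a bimonad. -/
structure IsLeftAntipode (T : Monad C) (Q : Comonoidal T.toFunctor) (L : LeftDualData C)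
    (s : ∀ X : C, T.obj (L.d (T.obj X)) ⟶ L.d X) : Prop where
  natural : ∀ {X Y : C} (f : X ⟶ Y),
    T.map (L.tr (T.map f)) ≫ s X = s Y ≫ L.tr f
  lant1 : ∀ X : C,
    T.map (L.tr (T.η.app X) ⊗ₘ 𝟙 X) ≫ T.map (L.ev X) ≫ Q.ε
      = Q.δ (L.d (T.obj X)) X
        ≫ ((T.map (L.tr (T.μ.app X)) ≫ s (T.obj X)) ⊗ₘ 𝟙 (T.obj X)) ≫ L.ev (T.obj X)
  lant2 : ∀ X : C,
    Q.ε ≫ L.coev X ≫ (T.η.app X ⊗ₘ 𝟙 (L.d X))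
      = T.map (L.coev (T.obj X)) ≫ Q.δ (T.obj X) (L.d (T.obj X)) ≫ (T.μ.app X ⊗ₘ s X)

/-- The axioms for a right antipode `s X : T(ʳT(X)) ⟶ ʳX` of a bimonad. -/
structure IsRightAntipode (T : Monad C) (Q : Comonoidal T.toFunctor) (R : RightDualData C)
    (s : ∀ X : C, T.obj (R.d (T.obj X)) ⟶ R.d X) : Prop where
  natural : ∀ {X Y : C} (f : X ⟶ Y),
    T.map (R.tr (T.map f)) ≫ s X = s Y ≫ R.tr f
  rant1 : ∀ X : C,
    T.map (𝟙 X ⊗ₘ R.tr (T.η.app X)) ≫ T.map (R.ev X) ≫ Q.ε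
      = Q.δ X (R.d (T.obj X))
        ≫ (𝟙 (T.obj X) ⊗ₘ (T.map (R.tr (T.μ.app X)) ≫ s (T.obj X))) ≫ R.ev (T.obj X)
  rant2 : ∀ X : C,
    Q.ε ≫ R.coev X ≫ (𝟙 (R.d X) ⊗ₘ T.η.app X)
      = T.map (R.coev (T.obj X)) ≫ Q.δ (R.d (T.obj X)) (T.obj X) ≫ (s X ⊗ₘ T.μ.app X)

/-- The canonical morphism `X ⟶ ʳ(ˡX)`. -/
def canRL (L : LeftDualData C) (R : RightDualData C) (X : C) : X ⟶ R.d (L.d X) :=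
  (λ_ X).inv ≫ (R.coev (L.d X) ⊗ₘ 𝟙 X) ≫ (α_ (R.d (L.d X)) (L.d X) X).hom
    ≫ (𝟙 (R.d (L.d X)) ⊗ₘ L.ev X) ≫ (ρ_ (R.d (L.d X))).hom

/-- The canonical morphism `ʳ(ˡX) ⟶ X`. -/
def canRLinv (L : LeftDualData C) (R : RightDualData C) (X : C) : R.d (L.d X) ⟶ X :=
  (λ_ (R.d (L.d X))).inv ≫ (L.coev X ⊗ₘ 𝟙 (R.d (L.d X)))
    ≫ (α_ X (L.d X) (R.d (L.d X))).hom ≫ (𝟙 X ⊗ₘ R.ev (L.d X)) ≫ (ρ_ X).hom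

/-- The canonical morphism `X ⟶ ˡ(ʳX)`. -/
def canLR (L : LeftDualData C) (R : RightDualData C) (X : C) : X ⟶ L.d (R.d X) :=
  (ρ_ X).inv ≫ (𝟙 X ⊗ₘ L.coev (R.d X)) ≫ (α_ X (R.d X) (L.d (R.d X))).inv
    ≫ (R.ev X ⊗ₘ 𝟙 (L.d (R.d X))) ≫ (λ_ (L.d (R.d X))).hom

/-- The canonical morphism `ˡ(ʳX) ⟶ X`. -/
def canLRinv (L : LeftDualData C) (R : RightDualData C) (X : C) : L.d (R.d X) ⟶ X :=
  (ρ_ (L.d (R.d X))).inv ≫ (𝟙 (L.d (R.d X)) ⊗ₘ R.coev X)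
    ≫ (α_ (L.d (R.d X)) (R.d X) X).inv ≫ (L.ev (R.d X) ⊗ₘ 𝟙 X) ≫ (λ_ X).hom

namespace LeftDualData

variable (L : LeftDualData C)

instance exactPairing (X : C) : ExactPairing X (L.d X) where
  coevaluation' := L.coev X
  evaluation' := L.ev X
  coevaluation_evaluation' := by
    rw [← cancel_epi (ρ_ (L.d X)).inv, Iso.inv_hom_id_assoc, ← Iso.comp_hom_eq_id]
    simpa using L.tri1 X
  evaluation_coevaluation' := by
    rw [← cancel_epi (λ_ X).inv, Iso.inv_hom_id_assoc, ← Iso.comp_hom_eq_id]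
    simpa using L.tri2 X

@[simp] lemma coevaluation_eq_coev (X : C) : η_ X (L.d X) = L.coev X := rfl

abbrev hasRightDual (X : C) : HasRightDual X := ⟨L.d X⟩

lemma tr_eq_rightAdjointMate {X Y : C} (f : X ⟶ Y) :
    L.tr f = @rightAdjointMate C _ _ X Y (L.hasRightDual X) (L.hasRightDual Y) f := by
  simp [tr, rightAdjointMate]
  rfl

@[simp] lemma tr_id (X : C) : L.tr (𝟙 X) = 𝟙 (L.d X) := by
  rw [tr_eq_rightAdjointMate]
  exact @rightAdjointMate_id C _ _ X (L.hasRightDual X)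

lemma tr_comp {X Y Z : C} (f : X ⟶ Y) (g : Y ⟶ Z) : L.tr (f ≫ g) = L.tr g ≫ L.tr f := by
  simp only [tr_eq_rightAdjointMate]
  exact @comp_rightAdjointMate C _ _ X Y Z (L.hasRightDual X) (L.hasRightDual Y)
    (L.hasRightDual Z) f g

lemma tr_whiskerRight_ev {X Y : C} (f : X ⟶ Y) :
    L.tr f ▷ X ≫ L.ev X = L.d Y ◁ f ≫ L.ev Y := by
  rw [tr_eq_rightAdjointMate]
  exact @rightAdjointMate_comp_evaluation C _ _ X Y (L.hasRightDual X) (L.hasRightDual Y) f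

lemma coev_whiskerLeft_tr {X Y : C} (f : X ⟶ Y) :
    L.coev Y ≫ Y ◁ L.tr f = L.coev X ≫ f ▷ L.d X := by
  rw [tr_eq_rightAdjointMate]
  exact @coevaluation_comp_rightAdjointMate C _ _ X Y (L.hasRightDual X) (L.hasRightDual Y) f

end LeftDualData

namespace Comonoidal

variable {T : C ⥤ C} (Q : Comonoidal T)

lemma δ_natural_left {X Y : C} (f : X ⟶ Y) (X' : C) :
    Q.δ X X' ≫ T.map f ▷ T.obj X' = T.map (f ▷ X') ≫ Q.δ Y X' := by
  simpa using (Q.δ_natural f (𝟙 X')).symm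

lemma δ_natural_right {X Y : C} (X' : C) (f : X ⟶ Y) :
    Q.δ X' X ≫ T.obj X' ◁ T.map f = T.map (X' ◁ f) ≫ Q.δ X' Y := by
  simpa using (Q.δ_natural (𝟙 X') f).symm

abbrev toOplaxMonoidal : T.OplaxMonoidal where
  η := Q.ε
  δ := Q.δ
  δ_natural_left := Q.δ_natural_left
  δ_natural_right := Q.δ_natural_right
  oplax_associativity X Y Z := by simpa using Q.coassoc X Y Z
  oplax_left_unitality X := by
    rw [← cancel_mono (λ_ (T.obj X)).hom, Iso.inv_hom_id, Category.assoc, Category.assoc,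
      ← tensorHom_id, Q.counit_left, ← T.map_comp, Iso.inv_hom_id, T.map_id]
  oplax_right_unitality X := by
    rw [← cancel_mono (ρ_ (T.obj X)).hom, Iso.inv_hom_id, Category.assoc, Category.assoc,
      ← id_tensorHom, Q.counit_right, ← T.map_comp, Iso.inv_hom_id, T.map_id]

end Comonoidal

open Functor.OplaxMonoidal in
/-- `f` and `g` act as a left and a right inverse of `m` with respect to the pairing, so they
agree: this is `f = f (m g) = (f m) g = g`, with the triangle identity supplying both ends. -/
theorem eq_of_evaluation_coevaluation {S : C ⥤ C} [S.OplaxMonoidal] {M D : C} [ExactPairing M D]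
    (m : S.obj M ⟶ M) {f g : S.obj D ⟶ D}
    (hf : δ S D M ≫ (f ⊗ₘ m) ≫ ε_ M D = S.map (ε_ M D) ≫ η S)
    (hg : η S ≫ η_ M D = S.map (η_ M D) ≫ δ S M D ≫ (m ⊗ₘ g)) : f = g := by
  calc f
    _ = (ρ_ _).inv ≫ (f ⊗ₘ η_ M D) ≫ (α_ D M D).inv ≫ ε_ M D ▷ D ≫ (λ_ D).hom := by
        rw [MonoidalCategory.tensorHom_def_assoc, ← rightUnitor_inv_naturality_assoc,
          ExactPairing.coevaluation_evaluation_assoc]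
        simp
    _ = S.map (ρ_ D).inv ≫ δ S D (𝟙_ C) ≫ (f ⊗ₘ (η S ≫ η_ M D)) ≫ (α_ D M D).inv
          ≫ ε_ M D ▷ D ≫ (λ_ D).hom := by
        rw [right_unitality, Category.assoc, Category.assoc, whiskerLeft_comp_tensorHom_assoc]
    _ = S.map ((ρ_ D).inv ≫ D ◁ η_ M D) ≫ δ S D (M ⊗ D) ≫ (f ⊗ₘ (δ S M D ≫ (m ⊗ₘ g)))
          ≫ (α_ D M D).inv ≫ ε_ M D ▷ D ≫ (λ_ D).hom := by
        rw [hg, ← whiskerLeft_comp_tensorHom_assoc, δ_natural_right_assoc, S.map_comp_assoc]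
    _ = S.map ((ρ_ D).inv ≫ D ◁ η_ M D ≫ (α_ D M D).inv) ≫ δ S (D ⊗ M) D
          ≫ ((δ S D M ≫ (f ⊗ₘ m) ≫ ε_ M D) ⊗ₘ g) ≫ (λ_ D).hom := by
        rw [← whiskerLeft_comp_tensorHom_assoc, associator_inv_naturality_assoc,
          associativity_inv_assoc, tensorHom_comp_whiskerRight_assoc,
          whiskerRight_comp_tensorHom_assoc]
        simp only [S.map_comp, Category.assoc]
    _ = S.map ((ρ_ D).inv ≫ D ◁ η_ M D ≫ (α_ D M D).inv ≫ ε_ M D ▷ D)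
          ≫ δ S (𝟙_ C) D ≫ (η S ⊗ₘ g) ≫ (λ_ D).hom := by
        rw [hf, ← whiskerRight_comp_tensorHom_assoc, δ_natural_left_assoc]
        simp only [S.map_comp, Category.assoc]
    _ = g := by
        rw [δ_comp_η_tensorHom_assoc, ← S.map_comp_assoc]
        simp

section Antipode

variable {T : Monad C} {Q : Comonoidal T.toFunctor} {L : LeftDualData C}
  {s : ∀ X : C, T.obj (L.d (T.obj X)) ⟶ L.d X}

variable (T L s) in
def dualAction (X : C) : T.obj (L.d (T.obj X)) ⟶ L.d (T.obj X) :=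
  T.map (L.tr (T.μ.app X)) ≫ s (T.obj X)

lemma dualAction_comp_tr_η (hs : IsLeftAntipode T Q L s) (X : C) :
    dualAction T L s X ≫ L.tr (T.η.app X) = s X := by
  rw [dualAction, Category.assoc, ← hs.natural, ← T.map_comp_assoc, ← L.tr_comp, T.right_unit]
  simp

lemma dualAction_comp_tr_μ (hs : IsLeftAntipode T Q L s) (X : C) :
    dualAction T L s X ≫ L.tr (T.μ.app X)
      = T.map (L.tr (T.μ.app X)) ≫ dualAction T L s (T.obj X) := by
  simp only [dualAction, Category.assoc, ← hs.natural, ← T.map_comp_assoc, ← L.tr_comp,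
    T.assoc]
  rfl

lemma dualAction_tensorHom_μ_ev (hs : IsLeftAntipode T Q L s) (X : C) :
    Q.δ _ _ ≫ (dualAction T L s X ⊗ₘ T.μ.app X) ≫ L.ev (T.obj X)
      = T.map (L.ev (T.obj X)) ≫ Q.ε := by
  have h := hs.lant1 (T.obj X)
  simp only [tensorHom_id] at h
  rw [MonoidalCategory.tensorHom_def_assoc, ← L.tr_whiskerRight_ev, ← comp_whiskerRight_assoc,
    dualAction_comp_tr_μ hs, comp_whiskerRight_assoc, reassoc_of% Q.δ_natural_left, dualAction]
  dsimp only [Functor.comp_obj]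
  rw [← h, ← T.map_comp_assoc, ← comp_whiskerRight, ← L.tr_comp, T.left_unit]
  simp

lemma coev_eq_tensorHom_dualAction (hs : IsLeftAntipode T Q L s) (X : C) :
    Q.ε ≫ L.coev (T.obj X)
      = T.map (L.coev (T.obj X)) ≫ Q.δ _ _ ≫ (T.μ.app X ⊗ₘ dualAction T L s X) := by
  rw [dualAction, ← whiskerLeft_comp_tensorHom, reassoc_of% Q.δ_natural_right,
    ← T.map_comp_assoc, L.coev_whiskerLeft_tr, T.map_comp_assoc,
    ← reassoc_of% Q.δ_natural_left,
    whiskerRight_comp_tensorHom, T.assoc, ← tensorHom_comp_whiskerRight]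
  dsimp only [Functor.comp_obj]
  rw [reassoc_of% (hs.lant2 (T.obj X)).symm, tensorHom_id, ← comp_whiskerRight, T.left_unit]
  simp

lemma coev_whiskerLeft_η_dualAction (hB : IsBimonad T Q) (hs : IsLeftAntipode T Q L s) (X : C) :
    L.coev (T.obj X) ≫ T.obj X ◁ (T.η.app _ ≫ dualAction T L s X) = L.coev (T.obj X) := by
  calc L.coev (T.obj X) ≫ T.obj X ◁ (T.η.app _ ≫ dualAction T L s X)
      = L.coev (T.obj X) ≫ (T.η.app _ ⊗ₘ T.η.app _)
          ≫ (T.μ.app X ⊗ₘ dualAction T L s X) := by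
        rw [tensorHom_comp_tensorHom, T.left_unit]
        simp
    _ = T.η.app _ ≫ T.map (L.coev (T.obj X)) ≫ Q.δ _ _
          ≫ (T.μ.app X ⊗ₘ dualAction T L s X) := by
        rw [← hB.eta_δ, Category.assoc]
        exact T.η.naturality_assoc _ _
    _ = L.coev (T.obj X) := by
        rw [← coev_eq_tensorHom_dualAction hs, reassoc_of% hB.eta_ε]

lemma dualAction_unit (hB : IsBimonad T Q) (hs : IsLeftAntipode T Q L s) (X : C) :
    T.η.app _ ≫ dualAction T L s X = 𝟙 _ := by
  refine (eq_of_evaluation_coevaluation (S := 𝟭 C) (M := T.obj X) (𝟙 _) ?_ ?_).symm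
  · simp
  · simpa using (coev_whiskerLeft_η_dualAction hB hs X).symm

lemma μ_dualAction_tensorHom_ev (hB : IsBimonad T Q) (hs : IsLeftAntipode T Q L s) (X : C) :
    T.map (Q.δ _ _) ≫ Q.δ _ _
        ≫ ((T.μ.app _ ≫ dualAction T L s X) ⊗ₘ (T.map (T.μ.app X) ≫ T.μ.app X))
        ≫ L.ev (T.obj X)
      = T.map (T.map (L.ev (T.obj X))) ≫ T.map Q.ε ≫ Q.ε := by
  rw [T.assoc, ← tensorHom_comp_tensorHom_assoc, reassoc_of% (hB.mu_δ _ _).symm,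
    dualAction_tensorHom_μ_ev hs, ← hB.mu_ε]
  exact (T.μ.naturality_assoc _ _).symm

lemma coev_eq_tensorHom_map_dualAction_dualAction (hs : IsLeftAntipode T Q L s) (X : C) :
    T.map Q.ε ≫ Q.ε ≫ L.coev (T.obj X)
      = T.map (T.map (L.coev (T.obj X))) ≫ T.map (Q.δ _ _) ≫ Q.δ _ _
        ≫ ((T.map (T.μ.app X) ≫ T.μ.app X)
          ⊗ₘ (T.map (dualAction T L s X) ≫ dualAction T L s X)) := by
  rw [← tensorHom_comp_tensorHom, ← reassoc_of% Q.δ_natural, ← T.map_comp_assoc,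
    ← T.map_comp_assoc, Category.assoc, ← coev_eq_tensorHom_dualAction hs, T.map_comp_assoc,
    coev_eq_tensorHom_dualAction hs]

lemma dualAction_assoc (hB : IsBimonad T Q) (hs : IsLeftAntipode T Q L s) (X : C) :
    T.μ.app _ ≫ dualAction T L s X = T.map (dualAction T L s X) ≫ dualAction T L s X := by
  let := Q.toOplaxMonoidal
  refine eq_of_evaluation_coevaluation (S := T.toFunctor ⋙ T.toFunctor)
    (T.map (T.μ.app X) ≫ T.μ.app X) ?_ ?_
  · simp only [Functor.OplaxMonoidal.comp_δ, Functor.OplaxMonoidal.comp_η, Category.assoc]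
    exact μ_dualAction_tensorHom_ev hB hs X
  · simp only [Functor.OplaxMonoidal.comp_δ, Functor.OplaxMonoidal.comp_η, Category.assoc]
    exact coev_eq_tensorHom_map_dualAction_dualAction hs X

end Antipode

/-- If a bimonad `T` on a monoidal category admits a left antipode
`s^l`, then `s^l_X ∘ μ_{ˡT(X)} = s^l_X ∘ T(s^l_{T(X)}) ∘ T²(ˡμ_X)` and
`s^l_X ∘ η_{ˡT(X)} = ˡη_X` for all `X`. -/
theorem stmt6 (T : Monad C) (Q : Comonoidal T.toFunctor) (hB : IsBimonad T Q)
    (L : LeftDualData C) (s : ∀ X : C, T.obj (L.d (T.obj X)) ⟶ L.d X)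
    (hs : IsLeftAntipode T Q L s) :
    ∀ X : C,
      (T.μ.app (L.d (T.obj X)) ≫ s X
        = T.map (T.map (L.tr (T.μ.app X))) ≫ T.map (s (T.obj X)) ≫ s X) ∧
      (T.η.app (L.d (T.obj X)) ≫ s X = L.tr (T.η.app X)) := by
  intro X
  have hsX := dualAction_comp_tr_η hs X
  constructor
  · conv_lhs => rw [← hsX]
    rw [reassoc_of% dualAction_assoc hB hs X, hsX, dualAction, T.map_comp, Category.assoc]
  · rw [← hsX, reassoc_of% dualAction_unit hB hs X]

end HopfMonadPaper
end

section
/- Let T be a bimonad on a monoidal category C. Under the canonical bijection Hom(1_C, T) ≅ Hom(U_T, U_T) (sending g to g^♯ with g^♯_{(M,r)} = r∘g_M), a natural transformation g : 1_C → T is grouplike (i.e., T_2(X,Y)∘g_{X⊗Y} = g_X ⊗ g_Y and T_0∘g_1 = id_1) if and only if g^♯ is a monoidal natural endomorphism of the strict monoidal forgetful functor U_T. Moreover, if C is autonomous and T is a Hopf monad, the set G(T) of grouplike elements is a group under convolution, with inverse of g given by S(g) = S⁻¹(g). -/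
/-!
A morphism into `T X` is determined by its pairing with the left dual `ˡ(T X)`, and by
construction `S(g)` pairs like `g ≫ s^l`. Evaluated along a grouplike `g`, the antipode axioms
therefore say that `S(g)` is a two-sided convolution inverse of `g` and that `S⁻¹(g)` is a right
one, so `S(g) = S⁻¹(g)`.

Both `φ ↦ δ ∘ φ_{X ⊗ Y}` and `φ ↦ φ_X ⊗ φ_Y` are monoid maps from the convolution monoid
`Hom(1_C, T)` to a convolution monoid of natural families `X ⊗ Y ⟶ T X ⊗ T Y` (the first one by
the bimonad axiom for `μ`), and `g` is grouplike where they agree (plus the counit condition).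
Hence grouplikes are closed under convolution and under two-sided inverses. The `♯`-criterion is
the grouplike condition tested on free algebras.
-/

open CategoryTheory MonoidalCategory

namespace HopfMonadPaper

variable {C : Type*} [Category C] [MonoidalCategory C]

/-- The component at `X` of `S(f) = ʳ(s^l ∘ f ˡT)`, i.e. `S(f)_X = ʳ(s^l_X ∘ f_{ˡT(X)})`,
written via the canonical isomorphisms `X ≅ ʳ(ˡX)`. -/
def Smap (T : Monad C) (L : LeftDualData C) (R : RightDualData C)
    (sl : ∀ X : C, T.obj (L.d (T.obj X)) ⟶ L.d X)
    (f : 𝟭 C ⟶ T.toFunctor) (X : C) : X ⟶ T.obj X :=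
  canRL L R X ≫ R.tr (f.app (L.d (T.obj X)) ≫ sl X) ≫ canRLinv L R (T.obj X)

/-- The component at `X` of `S⁻¹(f)`, i.e. `S⁻¹(f)_X = ˡ(s^r_X ∘ f_{ʳT(X)})`,
written via the canonical isomorphisms `X ≅ ˡ(ʳX)`. -/
def SinvMap (T : Monad C) (L : LeftDualData C) (R : RightDualData C)
    (sr : ∀ X : C, T.obj (R.d (T.obj X)) ⟶ R.d X)
    (f : 𝟭 C ⟶ T.toFunctor) (X : C) : X ⟶ T.obj X :=
  canLR L R X ≫ L.tr (f.app (R.d (T.obj X)) ≫ sr X) ≫ canLRinv L R (T.obj X)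

/-- A grouplike element of a bimonad. -/
def IsGrouplike (T : Monad C) (Q : Comonoidal T.toFunctor)
    (g : 𝟭 C ⟶ T.toFunctor) : Prop :=
  (∀ X Y : C, g.app (X ⊗ Y) ≫ Q.δ X Y = g.app X ⊗ₘ g.app Y) ∧
  g.app (𝟙_ C) ≫ Q.ε = 𝟙 (𝟙_ C)

open Category

section Duality

variable (L : LeftDualData C) (R : RightDualData C)

lemma LeftDualData.coevaluation_evaluation (X : C) :
    L.d X ◁ L.coev X ≫ (α_ (L.d X) X (L.d X)).inv ≫ L.ev X ▷ L.d X
      = (ρ_ (L.d X)).hom ≫ (λ_ (L.d X)).inv := by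
  rw [← cancel_epi (ρ_ (L.d X)).inv, ← cancel_mono (λ_ (L.d X)).hom]
  simpa using L.tri1 X

lemma LeftDualData.evaluation_coevaluation (X : C) :
    L.coev X ▷ X ≫ (α_ X (L.d X) X).hom ≫ X ◁ L.ev X = (λ_ X).hom ≫ (ρ_ X).inv := by
  rw [← cancel_epi (λ_ X).inv, ← cancel_mono (ρ_ X).hom]
  simpa using L.tri2 X

lemma RightDualData.coevaluation_evaluation (X : C) :
    X ◁ R.coev X ≫ (α_ X (R.d X) X).inv ≫ R.ev X ▷ X = (ρ_ X).hom ≫ (λ_ X).inv := by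
  rw [← cancel_epi (ρ_ X).inv, ← cancel_mono (λ_ X).hom]
  simpa using R.tri1 X

lemma RightDualData.evaluation_coevaluation (X : C) :
    R.coev X ▷ R.d X ≫ (α_ (R.d X) X (R.d X)).hom ≫ R.d X ◁ R.ev X
      = (λ_ (R.d X)).hom ≫ (ρ_ (R.d X)).inv := by
  rw [← cancel_epi (λ_ (R.d X)).inv, ← cancel_mono (ρ_ (R.d X)).hom]
  simpa using R.tri2 X

abbrev LeftDualData.exactPairing_s11 (X : C) : ExactPairing X (L.d X) where
  coevaluation' := L.coev X
  evaluation' := L.ev X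
  coevaluation_evaluation' := L.coevaluation_evaluation X
  evaluation_coevaluation' := L.evaluation_coevaluation X

abbrev RightDualData.exactPairing_s11 (X : C) : ExactPairing (R.d X) X where
  coevaluation' := R.coev X
  evaluation' := R.ev X
  coevaluation_evaluation' := R.coevaluation_evaluation X
  evaluation_coevaluation' := R.evaluation_coevaluation X

lemma LeftDualData.hom_ext {A B : C} {v w : A ⟶ B}
    (h : L.d B ◁ v ≫ L.ev B = L.d B ◁ w ≫ L.ev B) : v = w := by
  let := L.exactPairing_s11 B
  let : HasLeftDual (L.d B) := ⟨B⟩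
  rw [← cancel_mono (ρ_ B).inv]
  exact (tensorLeftHomEquiv_whiskerLeft_comp_evaluation (Z := L.d B) v).symm.trans
    ((congrArg _ h).trans (tensorLeftHomEquiv_whiskerLeft_comp_evaluation (Z := L.d B) w))

lemma RightDualData.hom_ext {A B : C} {v w : A ⟶ B}
    (h : v ▷ R.d B ≫ R.ev B = w ▷ R.d B ≫ R.ev B) : v = w := by
  let := R.exactPairing_s11 B
  let : HasRightDual (R.d B) := ⟨B⟩
  rw [← cancel_mono (λ_ B).inv]
  exact (tensorRightHomEquiv_whiskerRight_comp_evaluation (X := R.d B) v).symm.trans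
    ((congrArg _ h).trans (tensorRightHomEquiv_whiskerRight_comp_evaluation (X := R.d B) w))

lemma LeftDualData.tr_whiskerRight_ev_s11 {A B : C} (f : A ⟶ B) :
    L.tr f ▷ A ≫ L.ev A = L.d B ◁ f ≫ L.ev B := by
  let := L.exactPairing_s11 A
  let := L.exactPairing_s11 B
  let : HasRightDual A := ⟨L.d A⟩
  let : HasRightDual B := ⟨L.d B⟩
  have htr : L.tr f = fᘁ := by
    simp only [LeftDualData.tr, rightAdjointMate, id_tensorHom, tensorHom_id]
    rfl
  rw [htr]
  exact rightAdjointMate_comp_evaluation f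

lemma RightDualData.whiskerLeft_tr_ev {A B : C} (f : A ⟶ B) :
    A ◁ R.tr f ≫ R.ev A = f ▷ R.d B ≫ R.ev B := by
  let := R.exactPairing_s11 A
  let := R.exactPairing_s11 B
  let : HasLeftDual A := ⟨R.d A⟩
  let : HasLeftDual B := ⟨R.d B⟩
  have htr : R.tr f = ᘁf := by
    simp only [RightDualData.tr, leftAdjointMate, id_tensorHom, tensorHom_id]
    slice_rhs 3 4 => rw [associator_naturality_middle]
    simp only [Category.assoc]
    rfl
  rw [htr]
  exact leftAdjointMate_comp_evaluation f

lemma whiskerLeft_canRL_ev (X : C) :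
    L.d X ◁ canRL L R X ≫ R.ev (L.d X) = L.ev X := by
  calc L.d X ◁ canRL L R X ≫ R.ev (L.d X)
    = 𝟙 _ ⊗≫ L.d X ◁ R.coev (L.d X) ▷ X
      ⊗≫ ((L.d X ⊗ R.d (L.d X)) ◁ L.ev X ≫ R.ev (L.d X) ▷ 𝟙_ C) ⊗≫ 𝟙 _ := by
        simp only [canRL, id_tensorHom, tensorHom_id]
        monoidal
    _ = 𝟙 _ ⊗≫ (L.d X ◁ R.coev (L.d X) ≫ (α_ _ _ _).inv ≫ R.ev (L.d X) ▷ L.d X)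
        ▷ X
      ⊗≫ 𝟙_ C ◁ L.ev X ⊗≫ 𝟙 _ := by
        rw [whisker_exchange]
        monoidal
    _ = L.ev X := by
        rw [R.coevaluation_evaluation (L.d X)]
        monoidal

lemma whiskerLeft_canRLinv_ev (X : C) :
    L.d X ◁ canRLinv L R X ≫ L.ev X = R.ev (L.d X) := by
  calc L.d X ◁ canRLinv L R X ≫ L.ev X
    = 𝟙 _ ⊗≫ L.d X ◁ L.coev X ▷ R.d (L.d X)
      ⊗≫ ((L.d X ⊗ X) ◁ R.ev (L.d X) ≫ L.ev X ▷ 𝟙_ C) ⊗≫ 𝟙 _ := by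
        simp only [canRLinv, id_tensorHom, tensorHom_id]
        monoidal
    _ = 𝟙 _ ⊗≫ (L.d X ◁ L.coev X ≫ (α_ _ _ _).inv ≫ L.ev X ▷ L.d X) ▷ R.d (L.d X)
      ⊗≫ 𝟙_ C ◁ R.ev (L.d X) ⊗≫ 𝟙 _ := by
        rw [whisker_exchange]
        monoidal
    _ = R.ev (L.d X) := by
        rw [L.coevaluation_evaluation X]
        monoidal

lemma canLR_whiskerRight_ev (X : C) :
    canLR L R X ▷ R.d X ≫ L.ev (R.d X) = R.ev X := by
  calc canLR L R X ▷ R.d X ≫ L.ev (R.d X)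
    = 𝟙 _ ⊗≫ X ◁ L.coev (R.d X) ▷ R.d X
      ⊗≫ (R.ev X ▷ (L.d (R.d X) ⊗ R.d X) ≫ 𝟙_ C ◁ L.ev (R.d X)) ⊗≫ 𝟙 _ := by
        simp only [canLR, id_tensorHom, tensorHom_id]
        monoidal
    _ = 𝟙 _ ⊗≫ X
        ◁ (L.coev (R.d X) ▷ R.d X ≫ (α_ _ _ _).hom ≫ R.d X ◁ L.ev (R.d X))
      ⊗≫ R.ev X ▷ 𝟙_ C ⊗≫ 𝟙 _ := by
        rw [← whisker_exchange]
        monoidal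
    _ = R.ev X := by
        rw [L.evaluation_coevaluation (R.d X)]
        monoidal

lemma canLRinv_whiskerRight_ev (X : C) :
    canLRinv L R X ▷ R.d X ≫ R.ev X = L.ev (R.d X) := by
  calc canLRinv L R X ▷ R.d X ≫ R.ev X
    = 𝟙 _ ⊗≫ L.d (R.d X) ◁ R.coev X ▷ R.d X
      ⊗≫ (L.ev (R.d X) ▷ (X ⊗ R.d X) ≫ 𝟙_ C ◁ R.ev X) ⊗≫ 𝟙 _ := by
        simp only [canLRinv, id_tensorHom, tensorHom_id]
        monoidal
    _ = 𝟙 _ ⊗≫ L.d (R.d X) ◁ (R.coev X ▷ R.d X ≫ (α_ _ _ _).hom ≫ R.d X ◁ R.ev X)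
      ⊗≫ L.ev (R.d X) ▷ 𝟙_ C ⊗≫ 𝟙 _ := by
        rw [← whisker_exchange]
        monoidal
    _ = L.ev (R.d X) := by
        rw [R.evaluation_coevaluation X]
        monoidal

lemma LeftDualData.tr_eq_tr_comp_of_coev {X Y Z : C} {f : X ⟶ Y} {q : Z ⟶ Y}
    {u : L.d Z ⟶ L.d X} (h : L.coev X ≫ f ▷ L.d X = L.coev Z ≫ (q ⊗ₘ u)) :
    L.tr f = L.tr q ≫ u := by
  have h' : L.d Y ◁ L.coev X ≫ L.d Y ◁ f ▷ L.d X
      = L.d Y ◁ L.coev Z ≫ L.d Y ◁ q ▷ L.d Z ≫ L.d Y ◁ Y ◁ u := by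
    simp only [← MonoidalCategory.whiskerLeft_comp, h, MonoidalCategory.tensorHom_def]
  simp only [LeftDualData.tr, id_tensorHom, tensorHom_id, reassoc_of% h', assoc,
    associator_inv_naturality_right_assoc, whisker_exchange_assoc, id_whiskerLeft]
  simp

lemma RightDualData.tr_eq_tr_comp_of_coev {X Y Z : C} {f : X ⟶ Y} {q : Z ⟶ Y}
    {u : R.d Z ⟶ R.d X} (h : R.coev X ≫ R.d X ◁ f = R.coev Z ≫ (u ⊗ₘ q)) :
    R.tr f = R.tr q ≫ u := by
  have h' : R.coev X ▷ R.d Y ≫ (R.d X ◁ f) ▷ R.d Y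
      = R.coev Z ▷ R.d Y ≫ (R.d Z ◁ q) ▷ R.d Y ≫ (u ▷ Y) ▷ R.d Y := by
    simp only [← comp_whiskerRight, h, MonoidalCategory.tensorHom_def']
  simp only [RightDualData.tr, id_tensorHom, tensorHom_id, assoc,
    ← associator_naturality_middle_assoc, reassoc_of% h', associator_naturality_left_assoc,
    ← whisker_exchange_assoc, rightUnitor_naturality]

end Duality

section MonadConvolution

variable {D : Type*} [Category D] (T : Monad D)

def conv (φ ψ : 𝟭 D ⟶ T.toFunctor) : 𝟭 D ⟶ T.toFunctor where
  app X := ψ.app X ≫ φ.app (T.obj X) ≫ T.μ.app X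
  naturality X Y f := by
    have hψ := ψ.naturality f
    have hφ := φ.naturality (T.map f)
    simp only [Functor.id_map, Functor.id_obj] at hψ hφ ⊢
    simp only [reassoc_of% hψ, reassoc_of% hφ, T.mu_naturality, assoc]

@[simp]
lemma conv_app (φ ψ : 𝟭 D ⟶ T.toFunctor) (X : D) :
    (conv T φ ψ).app X = ψ.app X ≫ φ.app (T.obj X) ≫ T.μ.app X := rfl

lemma conv_eta_left (φ : 𝟭 D ⟶ T.toFunctor) : conv T T.η φ = φ := by
  ext X
  simp

lemma conv_eta_right (φ : 𝟭 D ⟶ T.toFunctor) : conv T φ T.η = φ := by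
  ext X
  have h := φ.naturality (T.η.app X)
  simp only [Functor.id_map] at h
  simp [reassoc_of% h]

lemma conv_assoc (φ ψ χ : 𝟭 D ⟶ T.toFunctor) :
    conv T φ (conv T ψ χ) = conv T (conv T φ ψ) χ := by
  ext X
  have h := φ.naturality (T.μ.app X)
  simp only [Functor.id_map] at h
  simp [reassoc_of% h, T.assoc]

lemma eq_of_conv_eq_eta {φ g ψ : 𝟭 D ⟶ T.toFunctor} (hφ : conv T φ g = T.η)
    (hψ : conv T g ψ = T.η) : φ = ψ := by
  rw [← conv_eta_right T φ, ← hψ, conv_assoc, hφ, conv_eta_left]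

end MonadConvolution

section TensorConvolution

variable (T : Monad C)

def convTensor (a b : ∀ X Y : C, X ⊗ Y ⟶ T.obj X ⊗ T.obj Y) (X Y : C) :
    X ⊗ Y ⟶ T.obj X ⊗ T.obj Y :=
  b X Y ≫ a (T.obj X) (T.obj Y) ≫ (T.μ.app X ⊗ₘ T.μ.app Y)

def IsNaturalTensor (a : ∀ X Y : C, X ⊗ Y ⟶ T.obj X ⊗ T.obj Y) : Prop :=
  ∀ {X X' Y Y' : C} (f : X ⟶ X') (f' : Y ⟶ Y'),
    (f ⊗ₘ f') ≫ a X' Y' = a X Y ≫ (T.map f ⊗ₘ T.map f')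

def tensorApp (φ : 𝟭 C ⟶ T.toFunctor) (X Y : C) : X ⊗ Y ⟶ T.obj X ⊗ T.obj Y :=
  φ.app X ⊗ₘ φ.app Y

lemma convTensor_assoc {a : ∀ X Y : C, X ⊗ Y ⟶ T.obj X ⊗ T.obj Y}
    (ha : IsNaturalTensor T a) (b c : ∀ X Y : C, X ⊗ Y ⟶ T.obj X ⊗ T.obj Y) :
    convTensor T a (convTensor T b c) = convTensor T (convTensor T a b) c := by
  ext X Y
  simp only [convTensor, assoc, reassoc_of% (ha (T.μ.app X) (T.μ.app Y)),
    tensorHom_comp_tensorHom, T.assoc]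

lemma convTensor_eta_left (b : ∀ X Y : C, X ⊗ Y ⟶ T.obj X ⊗ T.obj Y) :
    convTensor T (tensorApp T T.η) b = b := by
  ext X Y
  simp [convTensor, tensorApp, tensorHom_comp_tensorHom]

lemma convTensor_eta_right {a : ∀ X Y : C, X ⊗ Y ⟶ T.obj X ⊗ T.obj Y}
    (ha : IsNaturalTensor T a) : convTensor T a (tensorApp T T.η) = a := by
  ext X Y
  simp [convTensor, tensorApp, reassoc_of% (ha (T.η.app X) (T.η.app Y)),
    tensorHom_comp_tensorHom]

lemma eq_of_convTensor_eq_eta {a e b : ∀ X Y : C, X ⊗ Y ⟶ T.obj X ⊗ T.obj Y}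
    (ha : IsNaturalTensor T a) (hae : convTensor T a e = tensorApp T T.η)
    (heb : convTensor T e b = tensorApp T T.η) : a = b := by
  rw [← convTensor_eta_right T ha, ← heb, convTensor_assoc T ha, hae, convTensor_eta_left]

lemma tensorApp_natural (φ : 𝟭 C ⟶ T.toFunctor) : IsNaturalTensor T (tensorApp T φ) := by
  intro X X' Y Y' f f'
  have hf := φ.naturality f
  have hf' := φ.naturality f'
  simp only [Functor.id_map] at hf hf'
  simp only [tensorApp, tensorHom_comp_tensorHom, hf, hf']

lemma convTensor_tensorApp (φ ψ : 𝟭 C ⟶ T.toFunctor) :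
    convTensor T (tensorApp T φ) (tensorApp T ψ) = tensorApp T (conv T φ ψ) := by
  ext X Y
  simp [convTensor, tensorApp, tensorHom_comp_tensorHom]

end TensorConvolution

section Grouplike

variable {T : Monad C} {Q : Comonoidal T.toFunctor}

variable (Q) in
def coprodApp (φ : 𝟭 C ⟶ T.toFunctor) (X Y : C) : X ⊗ Y ⟶ T.obj X ⊗ T.obj Y :=
  φ.app (X ⊗ Y) ≫ Q.δ X Y

lemma coprodApp_natural (φ : 𝟭 C ⟶ T.toFunctor) : IsNaturalTensor T (coprodApp Q φ) := by
  intro X X' Y Y' f f'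
  have h := φ.naturality (f ⊗ₘ f')
  simp only [Functor.id_map] at h
  simp only [coprodApp, assoc, reassoc_of% h, Q.δ_natural]

lemma convTensor_coprodApp (hB : IsBimonad T Q) (φ ψ : 𝟭 C ⟶ T.toFunctor) :
    convTensor T (coprodApp Q φ) (coprodApp Q ψ) = coprodApp Q (conv T φ ψ) := by
  ext X Y
  have h := φ.naturality (Q.δ X Y)
  simp only [Functor.id_map] at h
  simp only [convTensor, coprodApp, conv_app, assoc, hB.mu_δ, reassoc_of% h]

lemma coprodApp_eta (hB : IsBimonad T Q) : coprodApp Q T.η = tensorApp T T.η := by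
  ext X Y
  exact hB.eta_δ X Y

lemma conv_app_unit_comp_ε (hB : IsBimonad T Q) (φ ψ : 𝟭 C ⟶ T.toFunctor) :
    (conv T φ ψ).app (𝟙_ C) ≫ Q.ε
      = (ψ.app (𝟙_ C) ≫ Q.ε) ≫ φ.app (𝟙_ C) ≫ Q.ε := by
  have h := φ.naturality Q.ε
  simp only [Functor.id_map] at h
  simp only [conv_app, assoc, hB.mu_ε, reassoc_of% h]

lemma isGrouplike_iff_coprodApp (g : 𝟭 C ⟶ T.toFunctor) :
    IsGrouplike T Q g ↔
      coprodApp Q g = tensorApp T g ∧ g.app (𝟙_ C) ≫ Q.ε = 𝟙 (𝟙_ C) := by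
  simp only [IsGrouplike, funext_iff, coprodApp, tensorApp]

lemma isGrouplike_eta (hB : IsBimonad T Q) : IsGrouplike T Q T.η :=
  ⟨hB.eta_δ, hB.eta_ε⟩

lemma isGrouplike_conv (hB : IsBimonad T Q) {g g' : 𝟭 C ⟶ T.toFunctor}
    (hg : IsGrouplike T Q g) (hg' : IsGrouplike T Q g') : IsGrouplike T Q (conv T g g') := by
  rw [isGrouplike_iff_coprodApp] at hg hg' ⊢
  refine ⟨?_, ?_⟩
  · rw [← convTensor_coprodApp hB, hg.1, hg'.1, convTensor_tensorApp]
  · rw [conv_app_unit_comp_ε hB, hg.2, hg'.2, comp_id]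

lemma isGrouplike_of_conv_eq_eta (hB : IsBimonad T Q) {g h : 𝟭 C ⟶ T.toFunctor}
    (hg : IsGrouplike T Q g) (hgh : conv T g h = T.η) (hhg : conv T h g = T.η) :
    IsGrouplike T Q h := by
  rw [isGrouplike_iff_coprodApp] at hg ⊢
  refine ⟨(eq_of_convTensor_eq_eta T (tensorApp_natural T h) (e := tensorApp T g) ?_ ?_).symm,
    ?_⟩
  · rw [convTensor_tensorApp, hhg]
  · rw [← hg.1, convTensor_coprodApp hB, hgh, coprodApp_eta hB]
  · have hε := conv_app_unit_comp_ε hB g h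
    rw [hgh, hB.eta_ε, hg.2, comp_id] at hε
    exact hε.symm

lemma isGrouplike_iff_forall_algebra (g : 𝟭 C ⟶ T.toFunctor) :
    IsGrouplike T Q g ↔
      (∀ M N : T.Algebra, g.app (M.A ⊗ N.A) ≫ Q.δ M.A N.A ≫ (M.a ⊗ₘ N.a)
          = (g.app M.A ≫ M.a) ⊗ₘ (g.app N.A ≫ N.a)) ∧
        g.app (𝟙_ C) ≫ Q.ε = 𝟙 (𝟙_ C) := by
  refine ⟨fun hg => ⟨fun M N => ?_, hg.2⟩, fun h => ⟨fun X Y => ?_, h.2⟩⟩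
  · rw [reassoc_of% (hg.1 M.A N.A), tensorHom_comp_tensorHom]
  · have hfree :
        g.app (T.obj X ⊗ T.obj Y) ≫ Q.δ (T.obj X) (T.obj Y) ≫ (T.μ.app X ⊗ₘ T.μ.app Y)
        = (g.app (T.obj X) ≫ T.μ.app X) ⊗ₘ (g.app (T.obj Y) ≫ T.μ.app Y) :=
      h.1 (T.free.obj X) (T.free.obj Y)
    calc g.app (X ⊗ Y) ≫ Q.δ X Y
        = convTensor T (coprodApp Q g) (tensorApp T T.η) X Y := by
          rw [convTensor_eta_right T (coprodApp_natural g)]; rfl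
      _ = (T.η.app X ⊗ₘ T.η.app Y)
            ≫ ((g.app (T.obj X) ≫ T.μ.app X) ⊗ₘ (g.app (T.obj Y) ≫ T.μ.app Y)) := by
          rw [← hfree]; simp only [convTensor, coprodApp, tensorApp, assoc]
      _ = (conv T g T.η).app X ⊗ₘ (conv T g T.η).app Y := tensorHom_comp_tensorHom _ _ _ _
      _ = g.app X ⊗ₘ g.app Y := by rw [conv_eta_right]

end Grouplike

section Antipode

variable {T : Monad C} {Q : Comonoidal T.toFunctor} {L : LeftDualData C} {R : RightDualData C}
  {sl : ∀ X : C, T.obj (L.d (T.obj X)) ⟶ L.d X}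
  {sr : ∀ X : C, T.obj (R.d (T.obj X)) ⟶ R.d X}

lemma whiskerLeft_Smap_ev (g : 𝟭 C ⟶ T.toFunctor) (X : C) :
    L.d (T.obj X) ◁ Smap T L R sl g X ≫ L.ev (T.obj X)
      = (g.app (L.d (T.obj X)) ≫ sl X) ▷ X ≫ L.ev X := by
  simp only [Smap, MonoidalCategory.whiskerLeft_comp, assoc, whiskerLeft_canRLinv_ev,
    RightDualData.whiskerLeft_tr_ev]
  rw [whisker_exchange_assoc, whiskerLeft_canRL_ev]

lemma whiskerLeft_Smap_comp_ev (g : 𝟭 C ⟶ T.toFunctor) {X Y : C} (p : T.obj X ⟶ Y) :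
    L.d Y ◁ (Smap T L R sl g X ≫ p) ≫ L.ev Y
      = (L.tr p ≫ g.app (L.d (T.obj X)) ≫ sl X) ▷ X ≫ L.ev X := by
  rw [MonoidalCategory.whiskerLeft_comp, assoc, ← L.tr_whiskerRight_ev_s11, whisker_exchange_assoc,
    whiskerLeft_Smap_ev]
  simp only [comp_whiskerRight, assoc]

lemma SinvMap_whiskerRight_ev (g : 𝟭 C ⟶ T.toFunctor) (X : C) :
    SinvMap T L R sr g X ▷ R.d (T.obj X) ≫ R.ev (T.obj X)
      = X ◁ (g.app (R.d (T.obj X)) ≫ sr X) ≫ R.ev X := by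
  simp only [SinvMap, comp_whiskerRight, assoc, canLRinv_whiskerRight_ev]
  rw [L.tr_whiskerRight_ev_s11 (A := R.d (T.obj X)) (g.app _ ≫ sr X), ← whisker_exchange_assoc,
    canLR_whiskerRight_ev]

lemma SinvMap_comp_whiskerRight_ev (g : 𝟭 C ⟶ T.toFunctor) {X Y : C} (p : T.obj X ⟶ Y) :
    (SinvMap T L R sr g X ≫ p) ▷ R.d Y ≫ R.ev Y
      = X ◁ (R.tr p ≫ g.app (R.d (T.obj X)) ≫ sr X) ≫ R.ev X := by
  rw [comp_whiskerRight, assoc, ← R.whiskerLeft_tr_ev, ← whisker_exchange_assoc,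
    SinvMap_whiskerRight_ev]
  simp only [MonoidalCategory.whiskerLeft_comp, assoc]

lemma IsLeftAntipode.natural_app (hsl : IsLeftAntipode T Q L sl) (g : 𝟭 C ⟶ T.toFunctor)
    {X Y : C} (f : X ⟶ Y) :
    L.tr (T.map f) ≫ g.app (L.d (T.obj X)) ≫ sl X
      = (g.app (L.d (T.obj Y)) ≫ sl Y) ≫ L.tr f := by
  have hg := g.naturality (L.tr (T.map f))
  simp only [Functor.id_map] at hg
  rw [reassoc_of% hg, hsl.natural f, assoc]

lemma IsRightAntipode.natural_app (hsr : IsRightAntipode T Q R sr) (g : 𝟭 C ⟶ T.toFunctor)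
    {X Y : C} (f : X ⟶ Y) :
    R.tr (T.map f) ≫ g.app (R.d (T.obj X)) ≫ sr X
      = (g.app (R.d (T.obj Y)) ≫ sr Y) ≫ R.tr f := by
  have hg := g.naturality (R.tr (T.map f))
  simp only [Functor.id_map] at hg
  rw [reassoc_of% hg, hsr.natural f, assoc]

lemma Smap_naturality (hsl : IsLeftAntipode T Q L sl) (g : 𝟭 C ⟶ T.toFunctor) {X Y : C}
    (f : X ⟶ Y) : f ≫ Smap T L R sl g Y = Smap T L R sl g X ≫ T.map f := by
  apply L.hom_ext
  rw [whiskerLeft_Smap_comp_ev, hsl.natural_app, comp_whiskerRight, assoc, L.tr_whiskerRight_ev_s11,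
    MonoidalCategory.whiskerLeft_comp, assoc, whiskerLeft_Smap_ev, whisker_exchange_assoc]

lemma SinvMap_naturality (hsr : IsRightAntipode T Q R sr) (g : 𝟭 C ⟶ T.toFunctor) {X Y : C}
    (f : X ⟶ Y) : f ≫ SinvMap T L R sr g Y = SinvMap T L R sr g X ≫ T.map f := by
  apply R.hom_ext
  rw [SinvMap_comp_whiskerRight_ev, hsr.natural_app, MonoidalCategory.whiskerLeft_comp, assoc,
    R.whiskerLeft_tr_ev, comp_whiskerRight, assoc, SinvMap_whiskerRight_ev, whisker_exchange_assoc]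

variable (L R) in
@[simps]
def S (hsl : IsLeftAntipode T Q L sl) (g : 𝟭 C ⟶ T.toFunctor) : 𝟭 C ⟶ T.toFunctor where
  app := Smap T L R sl g
  naturality _ _ f := Smap_naturality hsl g f

variable (L R) in
@[simps]
def Sinv (hsr : IsRightAntipode T Q R sr) (g : 𝟭 C ⟶ T.toFunctor) :
    𝟭 C ⟶ T.toFunctor where
  app := SinvMap T L R sr g
  naturality _ _ f := SinvMap_naturality hsr g f

lemma IsLeftAntipode.lant2_grouplike (hsl : IsLeftAntipode T Q L sl) {g : 𝟭 C ⟶ T.toFunctor}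
    (hg : IsGrouplike T Q g) (X : C) :
    L.tr (T.η.app X)
      = L.tr (g.app (T.obj X) ≫ T.μ.app X) ≫ g.app (L.d (T.obj X)) ≫ sl X := by
  apply L.tr_eq_tr_comp_of_coev
  have h := congrArg (g.app (𝟙_ C) ≫ ·) (hsl.lant2 X)
  have hn := g.naturality (L.coev (T.obj X))
  simp only [Functor.id_map] at hn
  rw [reassoc_of% hg.2, ← reassoc_of% hn, reassoc_of% (hg.1 (T.obj X) (L.d (T.obj X))),
    tensorHom_comp_tensorHom] at h
  simpa using h

lemma IsLeftAntipode.lant1_grouplike (hsl : IsLeftAntipode T Q L sl) {g : 𝟭 C ⟶ T.toFunctor}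
    (hg : IsGrouplike T Q g) (X : C) :
    L.d (T.obj X) ◁ g.app X
        ≫ (L.tr (T.μ.app X) ≫ g.app (L.d (T.obj (T.obj X))) ≫ sl (T.obj X)) ▷ T.obj X
        ≫ L.ev (T.obj X)
      = L.tr (T.η.app X) ▷ X ≫ L.ev X := by
  have h := congrArg (g.app (L.d (T.obj X) ⊗ X) ≫ ·) (hsl.lant1 X)
  have hn1 := g.naturality (L.tr (T.η.app X) ⊗ₘ 𝟙 X)
  have hn2 := g.naturality (L.ev X)
  have hn3 := g.naturality (L.tr (T.μ.app X))
  simp only [Functor.id_map] at hn1 hn2 hn3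
  rw [← reassoc_of% hn1, ← reassoc_of% hn2, hg.2, comp_id,
    reassoc_of% (hg.1 (L.d (T.obj X)) X), tensorHom_comp_tensorHom_assoc, comp_id,
    ← reassoc_of% hn3] at h
  simpa [MonoidalCategory.tensorHom_def'] using h.symm

lemma IsRightAntipode.rant2_grouplike (hsr : IsRightAntipode T Q R sr) {g : 𝟭 C ⟶ T.toFunctor}
    (hg : IsGrouplike T Q g) (X : C) :
    R.tr (T.η.app X)
      = R.tr (g.app (T.obj X) ≫ T.μ.app X) ≫ g.app (R.d (T.obj X)) ≫ sr X := by
  apply R.tr_eq_tr_comp_of_coev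
  have h := congrArg (g.app (𝟙_ C) ≫ ·) (hsr.rant2 X)
  have hn := g.naturality (R.coev (T.obj X))
  simp only [Functor.id_map] at hn
  rw [reassoc_of% hg.2, ← reassoc_of% hn, reassoc_of% (hg.1 (R.d (T.obj X)) (T.obj X)),
    tensorHom_comp_tensorHom] at h
  simpa using h

lemma conv_self_S (hsl : IsLeftAntipode T Q L sl) {g : 𝟭 C ⟶ T.toFunctor}
    (hg : IsGrouplike T Q g) : conv T g (S L R hsl g) = T.η := by
  ext X
  apply L.hom_ext
  rw [conv_app, S_app]
  dsimp only [Functor.id_obj]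
  rw [whiskerLeft_Smap_comp_ev, ← hsl.lant2_grouplike hg]
  exact L.tr_whiskerRight_ev_s11 _

lemma conv_S_self (hsl : IsLeftAntipode T Q L sl) {g : 𝟭 C ⟶ T.toFunctor}
    (hg : IsGrouplike T Q g) : conv T (S L R hsl g) g = T.η := by
  ext X
  apply L.hom_ext
  rw [conv_app, S_app]
  dsimp only [Functor.id_obj]
  rw [MonoidalCategory.whiskerLeft_comp, assoc, whiskerLeft_Smap_comp_ev,
    hsl.lant1_grouplike hg]
  exact L.tr_whiskerRight_ev_s11 _

lemma conv_self_Sinv (hsr : IsRightAntipode T Q R sr) {g : 𝟭 C ⟶ T.toFunctor}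
    (hg : IsGrouplike T Q g) : conv T g (Sinv L R hsr g) = T.η := by
  ext X
  apply R.hom_ext
  rw [conv_app, Sinv_app]
  dsimp only [Functor.id_obj]
  rw [SinvMap_comp_whiskerRight_ev, ← hsr.rant2_grouplike hg]
  exact R.whiskerLeft_tr_ev _

end Antipode

/-- For a bimonad `T`, a natural transformation `g : 1_C ⟶ T` is
grouplike iff `g^♯` (with `g^♯_{(M,r)} = r ∘ g_M`) is a monoidal endomorphism of the
strict monoidal forgetful functor `U_T`.  Moreover, if `T` is a Hopf monad (with
antipodes `sl`, `sr`), the grouplike elements form a group under convolution, the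
inverse of `g` being `S(g) = S⁻¹(g)`. -/
theorem stmt11 (T : Monad C) (Q : Comonoidal T.toFunctor) (hB : IsBimonad T Q)
    (L : LeftDualData C) (R : RightDualData C)
    (sl : ∀ X : C, T.obj (L.d (T.obj X)) ⟶ L.d X)
    (sr : ∀ X : C, T.obj (R.d (T.obj X)) ⟶ R.d X)
    (hsl : IsLeftAntipode T Q L sl) (hsr : IsRightAntipode T Q R sr) :
    (∀ g : 𝟭 C ⟶ T.toFunctor,
      IsGrouplike T Q g ↔
        ((∀ M N : T.Algebra,
          g.app (M.A ⊗ N.A) ≫ Q.δ M.A N.A ≫ (M.a ⊗ₘ N.a)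
            = (g.app M.A ≫ M.a) ⊗ₘ (g.app N.A ≫ N.a)) ∧
         g.app (𝟙_ C) ≫ Q.ε = 𝟙 (𝟙_ C))) ∧
    (∃ conv : (𝟭 C ⟶ T.toFunctor) → (𝟭 C ⟶ T.toFunctor) → (𝟭 C ⟶ T.toFunctor),
      (∀ (φ ψ : 𝟭 C ⟶ T.toFunctor) (X : C),
        (conv φ ψ).app X = ψ.app X ≫ φ.app (T.obj X) ≫ T.μ.app X) ∧
      IsGrouplike T Q T.η ∧
      (∀ g g' : 𝟭 C ⟶ T.toFunctor,
        IsGrouplike T Q g → IsGrouplike T Q g' → IsGrouplike T Q (conv g g')) ∧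
      (∀ g : 𝟭 C ⟶ T.toFunctor, IsGrouplike T Q g →
        ∃ h : 𝟭 C ⟶ T.toFunctor,
          (∀ X : C, h.app X = Smap T L R sl g X) ∧
          (∀ X : C, h.app X = SinvMap T L R sr g X) ∧
          IsGrouplike T Q h ∧ conv g h = T.η ∧ conv h g = T.η)) := by
  refine ⟨isGrouplike_iff_forall_algebra, conv T, fun _ _ _ => rfl, isGrouplike_eta hB,
    fun _ _ hg hg' => isGrouplike_conv hB hg hg', fun g hg => ?_⟩
  have hS_eq_Sinv : S L R hsl g = Sinv L R hsr g :=
    eq_of_conv_eq_eta T (conv_S_self hsl hg) (conv_self_Sinv hsr hg)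
  refine ⟨S L R hsl g, fun _ => rfl, fun X => by rw [hS_eq_Sinv]; rfl,
    isGrouplike_of_conv_eq_eta hB hg (conv_self_S hsl hg) (conv_S_self hsl hg),
    conv_self_S hsl hg, conv_S_self hsl hg⟩

end HopfMonadPaper
end

section
/- Let T be a bimonad on a monoidal category C and (M,ρ) a right T-comodule (i.e., a right comodule over the coalgebra T(1)). Then the triple (T(M), μ_M, ϱ) is a right Hopf T-module, where ϱ = (id_{T(M)} ⊗ μ_1) ∘ T_2(M, T(1)) ∘ T(ρ). In particular, for any object X of C, (T(X), μ_X, T_2(X,1)) is a right Hopf T-module. -/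
/-!
The coaction on `T(M)` is `T(ρ)` followed by `T_2(M, T𝟙)` and `μ_𝟙` on the second factor.
The bimonad axioms say that `μ_𝟙 : T²𝟙 ⟶ T𝟙` and `η_𝟙 : 𝟙 ⟶ T𝟙` are coalgebra morphisms:
the first transports coassociativity and counitality from `ρ` to `T(M)`, the second makes
`id_X ⊗ η_𝟙` a coaction, whose induced coaction is `T_2(X, 𝟙)` because `μ ∘ T(η) = id`.
The Hopf compatibility holds for every `ρ`: it is the compatibility of `μ` with `T_2`
together with associativity of `μ`.
-/

open CategoryTheory MonoidalCategory

namespace HopfMonadPaper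

variable {C : Type*} [Category C] [MonoidalCategory C]

/-- The comultiplication `T_2(𝟙,𝟙)` of the coalgebra `T(𝟙)`. -/
def Delta1 (T : C ⥤ C) (Q : Comonoidal T) :
    T.obj (𝟙_ C) ⟶ T.obj (𝟙_ C) ⊗ T.obj (𝟙_ C) :=
  T.map (λ_ (𝟙_ C)).inv ≫ Q.δ (𝟙_ C) (𝟙_ C)

/-- A right `T`-comodule, i.e. a right comodule over the coalgebra `T(𝟙)`
(with comultiplication `T_2(𝟙,𝟙)` and counit `T_0`). -/
structure IsRightComodule (T : C ⥤ C) (Q : Comonoidal T)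
    (M : C) (ρ : M ⟶ M ⊗ T.obj (𝟙_ C)) : Prop where
  coassoc : ρ ≫ (ρ ⊗ₘ 𝟙 (T.obj (𝟙_ C))) ≫ (α_ M (T.obj (𝟙_ C)) (T.obj (𝟙_ C))).hom
    = ρ ≫ (𝟙 M ⊗ₘ Delta1 T Q)
  counit : ρ ≫ (𝟙 M ⊗ₘ Q.ε) ≫ (ρ_ M).hom = 𝟙 M

/-- A right Hopf `T`-module: a `T`-module and right `T`-comodule satisfying the
compatibility `ρ ∘ r = (r ⊗ μ_𝟙) ∘ T_2(M,T(𝟙)) ∘ T(ρ)`. -/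
structure IsRightHopfModule (T : Monad C) (Q : Comonoidal T.toFunctor)
    (M : C) (r : T.obj M ⟶ M) (ρ : M ⟶ M ⊗ T.obj (𝟙_ C)) : Prop where
  unit : T.η.app M ≫ r = 𝟙 M
  assoc : T.μ.app M ≫ r = T.map r ≫ r
  comodule : IsRightComodule T.toFunctor Q M ρ
  hopf : r ≫ ρ = T.map ρ ≫ Q.δ M (T.obj (𝟙_ C)) ≫ (r ⊗ₘ T.μ.app (𝟙_ C))

namespace Comonoidal

variable {T : C ⥤ C} (Q : Comonoidal T)

lemma oplax_associativity (X Y Z : C) :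
    Q.δ (X ⊗ Y) Z ≫ Q.δ X Y ▷ T.obj Z ≫ (α_ (T.obj X) (T.obj Y) (T.obj Z)).hom
      = T.map (α_ X Y Z).hom ≫ Q.δ X (Y ⊗ Z) ≫ T.obj X ◁ Q.δ Y Z := by
  simpa using Q.coassoc X Y Z

end Comonoidal

def inducedCoaction (T : Monad C) (Q : Comonoidal T.toFunctor) {M : C}
    (ρ : M ⟶ M ⊗ T.obj (𝟙_ C)) : T.obj M ⟶ T.obj M ⊗ T.obj (𝟙_ C) :=
  T.map ρ ≫ Q.δ M (T.obj (𝟙_ C)) ≫ (𝟙 (T.obj M) ⊗ₘ T.μ.app (𝟙_ C))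

def trivialCoaction (T : Monad C) (X : C) : X ⟶ X ⊗ T.obj (𝟙_ C) :=
  (ρ_ X).inv ≫ X ◁ T.η.app (𝟙_ C)

lemma inducedCoaction_trivialCoaction (T : Monad C) (Q : Comonoidal T.toFunctor) (X : C) :
    inducedCoaction T Q (trivialCoaction T X) = T.map (ρ_ X).inv ≫ Q.δ X (𝟙_ C) := by
  simp only [inducedCoaction, trivialCoaction, id_tensorHom, Functor.map_comp, Category.assoc,
    ← reassoc_of% Q.δ_natural_right, ← whiskerLeft_comp, T.right_unit]
  simp

namespace IsBimonad

variable {T : Monad C} {Q : Comonoidal T.toFunctor}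

lemma μ_Delta1 (hB : IsBimonad T Q) :
    T.μ.app (𝟙_ C) ≫ Delta1 T.toFunctor Q
      = T.map (Delta1 T.toFunctor Q) ≫ Q.δ (T.obj (𝟙_ C)) (T.obj (𝟙_ C))
          ≫ (T.μ.app (𝟙_ C) ⊗ₘ T.μ.app (𝟙_ C)) := by
  simp only [Delta1, Functor.map_comp, Category.assoc, ← hB.mu_δ]
  exact (T.μ.naturality_assoc _ _).symm

lemma η_Delta1 (hB : IsBimonad T Q) :
    T.η.app (𝟙_ C) ≫ Delta1 T.toFunctor Q
      = (λ_ (𝟙_ C)).inv ≫ (T.η.app (𝟙_ C) ⊗ₘ T.η.app (𝟙_ C)) := by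
  rw [Delta1, ← hB.eta_δ]
  exact (T.η.naturality_assoc _ _).symm

lemma isRightComodule_trivialCoaction (hB : IsBimonad T Q) (X : C) :
    IsRightComodule T.toFunctor Q X (trivialCoaction T X) := by
  constructor
  · simp only [trivialCoaction, id_tensorHom, tensorHom_id, Category.assoc]
    rw [← whiskerLeft_comp, hB.η_Delta1, MonoidalCategory.tensorHom_def']
    monoidal
  · simp [trivialCoaction, ← whiskerLeft_comp_assoc, hB.eta_ε]

lemma isRightComodule_inducedCoaction (hB : IsBimonad T Q) {M : C}
    {ρ : M ⟶ M ⊗ T.obj (𝟙_ C)} (hM : IsRightComodule T.toFunctor Q M ρ) :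
    IsRightComodule T.toFunctor Q (T.obj M) (inducedCoaction T Q ρ) := by
  constructor
  -- Both sides become `T(ρ) ≫ T(ρ ▷ T𝟙) ≫ δ ≫ δ ▷ T²𝟙`, then `μ_𝟙` on the last two factors.
  · have hρ := hM.coassoc
    simp only [tensorHom_id, id_tensorHom] at hρ
    simp only [inducedCoaction, id_tensorHom, tensorHom_id, Category.assoc, comp_whiskerRight]
    rw [← whiskerLeft_comp (T.obj M) (T.μ.app _) (Delta1 _ _), hB.μ_Delta1, whiskerLeft_comp,
      whiskerLeft_comp, reassoc_of% Q.δ_natural_right, ← T.map_comp_assoc, ← hρ,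
      T.map_comp, T.map_comp, Category.assoc, Category.assoc,
      ← reassoc_of% Q.oplax_associativity, whisker_exchange_assoc,
      reassoc_of% Q.δ_natural_left, whisker_exchange_assoc, MonoidalCategory.tensorHom_def']
    monoidal
  · have hρ := hM.counit
    have hδ := Q.counit_right M
    simp only [id_tensorHom] at hρ hδ
    simp only [inducedCoaction, id_tensorHom, Category.assoc]
    rw [← whiskerLeft_comp_assoc, hB.mu_ε, whiskerLeft_comp_assoc,
      reassoc_of% Q.δ_natural_right, hδ, ← T.map_comp, ← T.map_comp, hρ, T.map_id]

lemma μ_inducedCoaction (hB : IsBimonad T Q) {M : C} (ρ : M ⟶ M ⊗ T.obj (𝟙_ C)) :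
    T.μ.app M ≫ inducedCoaction T Q ρ
      = T.map (inducedCoaction T Q ρ) ≫ Q.δ (T.obj M) (T.obj (𝟙_ C))
          ≫ (T.μ.app M ⊗ₘ T.μ.app (𝟙_ C)) := by
  have hμ : (T.μ.app M ⊗ₘ T.μ.app (T.obj (𝟙_ C))) ≫ T.obj M ◁ T.μ.app (𝟙_ C)
      = T.obj (T.obj M) ◁ T.map (T.μ.app (𝟙_ C)) ≫ (T.μ.app M ⊗ₘ T.μ.app (𝟙_ C)) := by
    rw [MonoidalCategory.tensorHom_def, MonoidalCategory.tensorHom_def, Category.assoc,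
      ← whiskerLeft_comp, ← T.assoc, whiskerLeft_comp, whisker_exchange_assoc]
    rfl
  simp only [inducedCoaction, id_tensorHom, Functor.map_comp, Category.assoc]
  rw [← T.μ.naturality_assoc ρ, reassoc_of% hB.mu_δ, hμ, ← reassoc_of% Q.δ_natural_right]
  rfl

lemma isRightHopfModule_inducedCoaction (hB : IsBimonad T Q) {M : C}
    {ρ : M ⟶ M ⊗ T.obj (𝟙_ C)} (hM : IsRightComodule T.toFunctor Q M ρ) :
    IsRightHopfModule T Q (T.obj M) (T.μ.app M) (inducedCoaction T Q ρ) :=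
  ⟨T.left_unit M, (T.assoc M).symm, hB.isRightComodule_inducedCoaction hM,
    hB.μ_inducedCoaction ρ⟩

end IsBimonad

/-- For a bimonad `T` and a right `T`-comodule `(M,ρ)`, the triple
`(T(M), μ_M, ϱ)` with `ϱ = (id ⊗ μ_𝟙) ∘ T_2(M,T(𝟙)) ∘ T(ρ)` is a right Hopf
`T`-module; in particular `(T(X), μ_X, T_2(X,𝟙))` is a right Hopf `T`-module for
every object `X`. -/
theorem stmt13 (T : Monad C) (Q : Comonoidal T.toFunctor) (hB : IsBimonad T Q) :
    (∀ (M : C) (ρ : M ⟶ M ⊗ T.obj (𝟙_ C)),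
      IsRightComodule T.toFunctor Q M ρ →
      IsRightHopfModule T Q (T.obj M) (T.μ.app M)
        (T.map ρ ≫ Q.δ M (T.obj (𝟙_ C)) ≫ (𝟙 (T.obj M) ⊗ₘ T.μ.app (𝟙_ C)))) ∧
    (∀ X : C,
      IsRightHopfModule T Q (T.obj X) (T.μ.app X)
        (T.map (ρ_ X).inv ≫ Q.δ X (𝟙_ C))) := by
  refine ⟨fun M ρ hM => hB.isRightHopfModule_inducedCoaction hM, fun X => ?_⟩
  rw [← inducedCoaction_trivialCoaction]
  exact hB.isRightHopfModule_inducedCoaction (hB.isRightComodule_trivialCoaction X)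

end HopfMonadPaper
end
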